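/- Let m be an even integer with m ≥ 6, let d > 0 be a real number, and let n = q·m for a positive integer q. Define the real m×m circulant matrix B by B_{j,k} = 6 + d if j = k; B_{j,k} = −4 if j ≡ k − 1 (mod m) or j ≡ k + 1 (mod m); B_{j,k} = 1 if j ≡ k − 2 (mod m) or j ≡ k + 2 (mod m); and B_{j,k} = 0 otherwise. Let U be any m×m permutation matrix and V any n×n permutation matrix, and define the m×n matrix A = U · [B B ⋯ B] · V, where [B B ⋯ B] is the horizontal concatenation of q copies of B. Then the condition number of A equals (16 + d)/d. -/

import Mathlib

/-!
Let `L = 2 - S - S⁻¹` be the Laplacian of the `m`-cycle, `S` the cyclic shift. For `m ≥ 5`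
the matrix `B` is `d + L²`. As `L` is symmetric, `⟪B w, w⟫ = d ‖w‖² + ‖L w‖² ≥ d ‖w‖²`,
and `‖L‖ ≤ 4` by the triangle inequality; hence `d ‖w‖ ≤ ‖B w‖ ≤ (16 + d) ‖w‖`, with
equality for the constant vector and, `m` being even, for the alternating vector `(-1)ʲ`.
Permutation matrices preserve Euclidean norms, and `[B ⋯ B]ᵀ y` lists the entries of
`Bᵀ y = B y` `q` times, so both extreme singular values of `A` are `√q` times those of `B`.
-/

open Matrix

/-- The Euclidean norm of a vector in `ℝᵏ`. -/
noncomputable def euclNorm {k : ℕ} (v : Fin k → ℝ) : ℝ :=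
  Real.sqrt (∑ i, v i ^ 2)

/-- The greatest singular value of a real `m × k` matrix `M` (`m ≤ k`):
`sup {‖Mᵀ y‖ : y ∈ ℝᵐ, ‖y‖ = 1}`. -/
noncomputable def sigmaMax {m k : ℕ} (M : Matrix (Fin m) (Fin k) ℝ) : ℝ :=
  sSup {x | ∃ y : Fin m → ℝ, euclNorm y = 1 ∧ x = euclNorm (Mᵀ.mulVec y)}

/-- The least (`m`-th greatest) singular value of a real `m × k` matrix `M`
(`m ≤ k`): `inf {‖Mᵀ y‖ : y ∈ ℝᵐ, ‖y‖ = 1}`. -/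
noncomputable def sigmaMin {m k : ℕ} (M : Matrix (Fin m) (Fin k) ℝ) : ℝ :=
  sInf {x | ∃ y : Fin m → ℝ, euclNorm y = 1 ∧ x = euclNorm (Mᵀ.mulVec y)}

/-- The condition number of a real `m × k` matrix (`m ≤ k`): the ratio of its
greatest singular value to its least singular value. -/
noncomputable def condNum {m k : ℕ} (M : Matrix (Fin m) (Fin k) ℝ) : ℝ :=
  sigmaMax M / sigmaMin M

/-- The `m × m` circulant matrix of the paper: `6 + d` on the diagonal, `-4` on
the (cyclic) first off-diagonals (`j ≡ k ± 1 (mod m)`), `1` on the (cyclic)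
second off-diagonals (`j ≡ k ± 2 (mod m)`), and `0` elsewhere. -/
noncomputable def circB (m : ℕ) (d : ℝ) : Matrix (Fin m) (Fin m) ℝ :=
  Matrix.of fun j k =>
    if (j : ℕ) = (k : ℕ) then 6 + d
    else if ((j : ℕ) + 1) % m = (k : ℕ) ∨ ((k : ℕ) + 1) % m = (j : ℕ) then -4
    else if ((j : ℕ) + 2) % m = (k : ℕ) ∨ ((k : ℕ) + 2) % m = (j : ℕ) then 1
    else 0

/-- The horizontal concatenation `[B B ⋯ B]` of copies of `circB m d`, as an
`m × n` matrix (when `n` is a multiple of `m`, column `j` of the concatenation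
is column `j mod m` of `B`). -/
noncomputable def concatB (m n : ℕ) (hm : 0 < m) (d : ℝ) :
    Matrix (Fin m) (Fin n) ℝ :=
  Matrix.of fun i j => circB m d i ⟨(j : ℕ) % m, Nat.mod_lt _ hm⟩

/-- A square `0`-`1` matrix with exactly one `1` in each row and each column. -/
def IsPermMatrix {k : ℕ} (M : Matrix (Fin k) (Fin k) ℝ) : Prop :=
  (∀ i j, M i j = 0 ∨ M i j = 1) ∧
  (∀ i, ∃! j, M i j = 1) ∧
  (∀ j, ∃! i, M i j = 1)

theorem Nat.add_mod_eq_iff {a b c m : ℕ} (ha : a < m) (hc : c < m) :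
    (a + c) % m = b ↔ b < m ∧ (b = a + c ∨ b + m = a + c) := by
  rw [Nat.add_mod_eq_ite, Nat.mod_eq_of_lt ha, Nat.mod_eq_of_lt hc]
  split_ifs <;> omega

theorem Even.neg_one_pow_mod {R : Type*} [Ring R] {m : ℕ} (hm : Even m) (x : ℕ) :
    (-1 : R) ^ (x % m) = (-1) ^ x := by
  rw [neg_one_pow_eq_pow_mod_two, Nat.mod_mod_of_dvd _ (even_iff_two_dvd.mp hm),
    ← neg_one_pow_eq_pow_mod_two]

section FinArith

theorem Fin.eq_add_iff_val {m : ℕ} {c j k : Fin m} : k = j + c ↔ ((j : ℕ) + c) % m = k := by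
  rw [Fin.ext_iff, Fin.val_add, eq_comm]

variable {m : ℕ} [NeZero m]

theorem Fin.eq_sub_iff_val {c j k : Fin m} : k = j - c ↔ ((k : ℕ) + c) % m = j := by
  rw [eq_sub_iff_add_eq, eq_comm, Fin.eq_add_iff_val]

theorem Fin.val_ofNat_of_lt {c : ℕ} (hc : c < m) : ((OfNat.ofNat c : Fin m) : ℕ) = c := by
  show (Fin.ofNat m c : ℕ) = c
  rw [Fin.val_ofNat, Nat.mod_eq_of_lt hc]

theorem Fin.one_add_one_eq_two : (1 + 1 : Fin m) = 2 :=
  Fin.ext (by rw [Fin.val_add, Fin.val_one']; exact (Nat.add_mod _ _ _).symm)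

theorem Fin.neg_one_pow_val_add_one {R : Type*} [Ring R] (hm : Even m) (j : Fin m) :
    (-1 : R) ^ ((j + 1 : Fin m) : ℕ) = -(-1) ^ (j : ℕ) := by
  rw [Fin.val_add, hm.neg_one_pow_mod, Fin.val_one', pow_add,
    hm.neg_one_pow_mod, pow_one, mul_neg_one]

end FinArith

section EuclNorm

variable {k : ℕ}

theorem euclNorm_eq_norm (v : Fin k → ℝ) : euclNorm v = ‖WithLp.toLp 2 v‖ := by
  simp [euclNorm, EuclideanSpace.norm_eq]

theorem euclNorm_nonneg (v : Fin k → ℝ) : 0 ≤ euclNorm v := Real.sqrt_nonneg _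

theorem euclNorm_sq (v : Fin k → ℝ) : euclNorm v ^ 2 = v ⬝ᵥ v := by
  rw [euclNorm, Real.sq_sqrt (Finset.sum_nonneg fun i _ => sq_nonneg (v i))]
  simp [dotProduct, sq]

theorem dotProduct_le_euclNorm_mul (u v : Fin k → ℝ) :
    u ⬝ᵥ v ≤ euclNorm u * euclNorm v := by
  rw [euclNorm_eq_norm, euclNorm_eq_norm, dotProduct_comm, ← star_trivial u,
    ← EuclideanSpace.inner_toLp_toLp]
  exact real_inner_le_norm _ _

theorem euclNorm_add_le (u v : Fin k → ℝ) : euclNorm (u + v) ≤ euclNorm u + euclNorm v := by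
  simpa only [euclNorm_eq_norm, WithLp.toLp_add] using norm_add_le _ _

theorem euclNorm_sub_le (u v : Fin k → ℝ) : euclNorm (u - v) ≤ euclNorm u + euclNorm v := by
  simpa only [euclNorm_eq_norm, WithLp.toLp_sub] using norm_sub_le _ _

theorem euclNorm_smul (c : ℝ) (v : Fin k → ℝ) : euclNorm (c • v) = |c| * euclNorm v := by
  rw [euclNorm_eq_norm, euclNorm_eq_norm, WithLp.toLp_smul, norm_smul, Real.norm_eq_abs]

theorem euclNorm_comp_perm (v : Fin k → ℝ) (σ : Equiv.Perm (Fin k)) :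
    euclNorm (v ∘ σ) = euclNorm v :=
  congrArg Real.sqrt (Equiv.sum_comp σ fun i => v i ^ 2)

theorem exists_euclNorm_eq_one_of_mulVec_eq_smul {M : Matrix (Fin k) (Fin k) ℝ}
    {w : Fin k → ℝ} {c : ℝ} (hw : w ≠ 0) (h : M *ᵥ w = c • w) :
    ∃ y, euclNorm y = 1 ∧ euclNorm (M *ᵥ y) = |c| := by
  have hpos : 0 < euclNorm w := by
    rw [euclNorm_eq_norm, norm_pos_iff]
    exact fun h0 => hw (congrArg WithLp.ofLp h0)
  refine ⟨(euclNorm w)⁻¹ • w, ?_, ?_⟩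
  · rw [euclNorm_smul, abs_inv, abs_of_pos hpos, inv_mul_cancel₀ hpos.ne']
  · rw [mulVec_smul, h, smul_comm, euclNorm_smul, euclNorm_smul, abs_inv, abs_of_pos hpos]
    field_simp

end EuclNorm

section PermMatrix

variable {k : ℕ}

theorem IsPermMatrix.exists_eq_permMatrix {M : Matrix (Fin k) (Fin k) ℝ} (h : IsPermMatrix M) :
    ∃ σ : Equiv.Perm (Fin k), M = σ.permMatrix ℝ := by
  obtain ⟨h01, hrow, hcol⟩ := h
  choose f hf hf' using hrow
  have hinj : f.Injective := fun a b hab => (hcol (f a)).unique (hf a) (hab ▸ hf b)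
  refine ⟨Equiv.ofBijective f hinj.bijective_of_finite, ?_⟩
  ext i j
  rw [Equiv.Perm.permMatrix, PEquiv.toMatrix_apply]
  simp only [Equiv.toPEquiv_apply, Option.mem_def, Option.some.injEq, Equiv.ofBijective_apply]
  split_ifs with hij
  · exact hij ▸ hf i
  · exact (h01 i j).resolve_right fun h1 => hij (hf' i j h1).symm

def sphereImageNorms {m n : ℕ} (M : Matrix (Fin m) (Fin n) ℝ) : Set ℝ :=
  {x | ∃ y : Fin m → ℝ, euclNorm y = 1 ∧ x = euclNorm (Mᵀ *ᵥ y)}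

theorem condNum_eq_div {m n : ℕ} (M : Matrix (Fin m) (Fin n) ℝ) :
    condNum M = sSup (sphereImageNorms M) / sInf (sphereImageNorms M) := rfl

theorem sphereImageNorms_permMatrix_mul_mul {m n : ℕ} (σ : Equiv.Perm (Fin m))
    (τ : Equiv.Perm (Fin n)) (M : Matrix (Fin m) (Fin n) ℝ) :
    sphereImageNorms (σ.permMatrix ℝ * M * τ.permMatrix ℝ) = sphereImageNorms M := by
  have hnorm : ∀ y, euclNorm ((σ.permMatrix ℝ * M * τ.permMatrix ℝ)ᵀ *ᵥ y) =
      euclNorm (Mᵀ *ᵥ (y ∘ ⇑σ⁻¹)) := fun y => by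
    rw [transpose_mul, transpose_mul, ← mulVec_mulVec, ← mulVec_mulVec, transpose_permMatrix,
      transpose_permMatrix, permMatrix_mulVec, permMatrix_mulVec, euclNorm_comp_perm]
  ext x
  constructor
  · rintro ⟨y, hy, rfl⟩
    exact ⟨y ∘ ⇑σ⁻¹, by rwa [euclNorm_comp_perm], hnorm y⟩
  · rintro ⟨y, hy, rfl⟩
    refine ⟨y ∘ σ, by rwa [euclNorm_comp_perm], ?_⟩
    rw [hnorm, Function.comp_assoc, ← Equiv.Perm.coe_mul, mul_inv_cancel, Equiv.Perm.coe_one,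
      Function.comp_id]

theorem condNum_mul_mul_of_isPermMatrix {m n : ℕ} {U : Matrix (Fin m) (Fin m) ℝ}
    {V : Matrix (Fin n) (Fin n) ℝ} (hU : IsPermMatrix U) (hV : IsPermMatrix V)
    (M : Matrix (Fin m) (Fin n) ℝ) : condNum (U * M * V) = condNum M := by
  obtain ⟨σ, rfl⟩ := hU.exists_eq_permMatrix
  obtain ⟨τ, rfl⟩ := hV.exists_eq_permMatrix
  rw [condNum_eq_div, condNum_eq_div, sphereImageNorms_permMatrix_mul_mul]

end PermMatrix

section Concat

open scoped Pointwise

theorem Fin.sum_mod_eq_nsmul {M : Type*} [AddCommMonoid M] {m : ℕ} (q : ℕ) (hm : 0 < m)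
    (g : Fin m → M) : ∑ j : Fin (q * m), g ⟨j % m, Nat.mod_lt _ hm⟩ = q • ∑ i, g i := by
  rw [← finProdFinEquiv.sum_comp, Fintype.sum_prod_type]
  simp only [finProdFinEquiv_apply_val, Nat.add_mul_mod_self_left, Nat.mod_eq_of_lt (Fin.isLt _),
    Fin.eta, Finset.sum_const, Finset.card_univ, Fintype.card_fin]

theorem euclNorm_transpose_concatB_mulVec {m q : ℕ} (hm : 0 < m) (d : ℝ) (w : Fin m → ℝ) :
    euclNorm ((concatB m (q * m) hm d)ᵀ *ᵥ w) = √q * euclNorm ((circB m d)ᵀ *ᵥ w) := by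
  rw [euclNorm, euclNorm, ← Real.sqrt_mul (Nat.cast_nonneg q), ← nsmul_eq_mul,
    ← Fin.sum_mod_eq_nsmul q hm fun i => ((circB m d)ᵀ *ᵥ w) i ^ 2]
  rfl

theorem sphereImageNorms_concatB {m q : ℕ} (hm : 0 < m) (d : ℝ) :
    sphereImageNorms (concatB m (q * m) hm d) = √q • sphereImageNorms (circB m d) := by
  ext x
  simp only [sphereImageNorms, Set.mem_smul_set, Set.mem_ofPred_eq, smul_eq_mul,
    euclNorm_transpose_concatB_mulVec]
  constructor
  · rintro ⟨y, hy, rfl⟩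
    exact ⟨_, ⟨y, hy, rfl⟩, rfl⟩
  · rintro ⟨_, ⟨y, hy, rfl⟩, rfl⟩
    exact ⟨y, hy, rfl⟩

theorem condNum_concatB {m q : ℕ} (hm : 0 < m) (hq : 0 < q) (d : ℝ) :
    condNum (concatB m (q * m) hm d) = condNum (circB m d) := by
  have hsq : 0 < √(q : ℝ) := Real.sqrt_pos.mpr (Nat.cast_pos.mpr hq)
  rw [condNum_eq_div, condNum_eq_div, sphereImageNorms_concatB, Real.sSup_smul_of_nonneg hsq.le,
    Real.sInf_smul_of_nonneg hsq.le, smul_eq_mul, smul_eq_mul, mul_div_mul_left _ _ hsq.ne']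

end Concat

section Circulant

variable {m : ℕ}

theorem circB_transpose (d : ℝ) : (circB m d)ᵀ = circB m d := by
  ext j k
  simp only [circB, transpose_apply, of_apply, eq_comm, or_comm]

variable [NeZero m]

-- For `m ≥ 5` the residues `j, j ± 1, j ± 2` are pairwise distinct, so the cases separate.
theorem circB_apply (hm : 5 ≤ m) (d : ℝ) (j k : Fin m) :
    circB m d j k = (if k = j then 6 + d else 0) + (if k = j + 1 then -4 else 0)
      + (if k = j - 1 then -4 else 0) + (if k = j + 2 then 1 else 0)
      + (if k = j - 2 then 1 else 0) := by
  have h1 : ((1 : Fin m) : ℕ) = 1 := Fin.val_ofNat_of_lt (c := 1) (by omega)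
  have h2 : ((2 : Fin m) : ℕ) = 2 := Fin.val_ofNat_of_lt (c := 2) (by omega)
  rw [circB, of_apply]
  simp only [Fin.eq_add_iff_val, Fin.eq_sub_iff_val, h1, h2]
  have h1m : 1 < m := by omega
  have h2m : 2 < m := by omega
  simp only [Fin.ext_iff, Nat.add_mod_eq_iff j.isLt h1m, Nat.add_mod_eq_iff k.isLt h1m,
    Nat.add_mod_eq_iff j.isLt h2m, Nat.add_mod_eq_iff k.isLt h2m, j.isLt, k.isLt, true_and]
  split_ifs <;> first | omega | norm_num

theorem circB_mulVec_apply (hm : 5 ≤ m) (d : ℝ) (w : Fin m → ℝ) (j : Fin m) :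
    (circB m d *ᵥ w) j =
      (6 + d) * w j - 4 * w (j + 1) - 4 * w (j - 1) + w (j + 2) + w (j - 2) := by
  simp only [mulVec, dotProduct, circB_apply hm, add_mul, ite_mul, zero_mul,
    Finset.sum_add_distrib, Finset.sum_ite_eq', Finset.mem_univ, if_true]
  ring

def cycleLaplacian : (Fin m → ℝ) →ₗ[ℝ] Fin m → ℝ where
  toFun w j := 2 * w j - w (j + 1) - w (j - 1)
  map_add' u v := by ext j; simp only [Pi.add_apply]; ring
  map_smul' c v := by ext j; simp only [Pi.smul_apply, smul_eq_mul, RingHom.id_apply]; ring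

theorem cycleLaplacian_apply (w : Fin m → ℝ) (j : Fin m) :
    cycleLaplacian w j = 2 * w j - w (j + 1) - w (j - 1) := rfl

local notation "Δ" => cycleLaplacian

theorem circB_mulVec (hm : 5 ≤ m) (d : ℝ) (w : Fin m → ℝ) :
    circB m d *ᵥ w = d • w + Δ (Δ w) := by
  ext j
  rw [circB_mulVec_apply hm]
  simp only [cycleLaplacian_apply, Pi.add_apply, Pi.smul_apply, smul_eq_mul,
    add_sub_cancel_right, sub_add_cancel, add_assoc, sub_sub, Fin.one_add_one_eq_two]
  ring

theorem cycleLaplacian_dotProduct (u v : Fin m → ℝ) : Δ u ⬝ᵥ v = u ⬝ᵥ Δ v := by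
  have shift : ∀ f g : Fin m → ℝ, ∑ j, f (j + 1) * g j = ∑ j, f j * g (j - 1) :=
    fun f g => Fintype.sum_equiv (Equiv.addRight 1) _ _ fun j => by simp
  have shift' : ∀ f g : Fin m → ℝ, ∑ j, f (j - 1) * g j = ∑ j, f j * g (j + 1) :=
    fun f g => Fintype.sum_equiv (Equiv.subRight 1) _ _ fun j => by simp
  simp only [cycleLaplacian_apply, dotProduct, sub_mul, mul_sub, Finset.sum_sub_distrib, shift,
    shift']
  simp only [mul_assoc, mul_left_comm _ (2 : ℝ)]
  ring

theorem euclNorm_cycleLaplacian_le (v : Fin m → ℝ) : euclNorm (Δ v) ≤ 4 * euclNorm v :=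
  calc euclNorm (Δ v)
        = euclNorm ((2 : ℝ) • v - v ∘ Equiv.addRight 1 - v ∘ Equiv.subRight 1) := rfl
    _ ≤ euclNorm ((2 : ℝ) • v) + euclNorm (v ∘ Equiv.addRight 1) +
          euclNorm (v ∘ Equiv.subRight 1) :=
      (euclNorm_sub_le _ _).trans (by gcongr; exact euclNorm_sub_le _ _)
    _ = 4 * euclNorm v := by
      rw [euclNorm_smul, euclNorm_comp_perm, euclNorm_comp_perm, abs_two]; ring

theorem cycleLaplacian_const (c : ℝ) : Δ (fun _ : Fin m => c) = 0 := by
  ext j; rw [cycleLaplacian_apply, Pi.zero_apply]; ring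

theorem cycleLaplacian_alternating (hm : Even m) :
    Δ (fun j : Fin m => (-1 : ℝ) ^ (j : ℕ)) =
      (4 : ℝ) • fun j : Fin m => (-1 : ℝ) ^ (j : ℕ) := by
  ext j
  have hsub : (-1 : ℝ) ^ ((j - 1 : Fin m) : ℕ) = -(-1) ^ (j : ℕ) := by
    rw [← neg_neg ((-1 : ℝ) ^ ((j - 1 : Fin m) : ℕ)), ← Fin.neg_one_pow_val_add_one hm,
      sub_add_cancel]
  simp only [cycleLaplacian_apply, Fin.neg_one_pow_val_add_one hm, hsub, Pi.smul_apply,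
    smul_eq_mul]
  ring

theorem mul_euclNorm_le_euclNorm_circB_mulVec (hm : 5 ≤ m) (d : ℝ) (w : Fin m → ℝ) :
    d * euclNorm w ≤ euclNorm (circB m d *ᵥ w) := by
  have hquad : d * euclNorm w ^ 2 ≤ (circB m d *ᵥ w) ⬝ᵥ w := by
    rw [circB_mulVec hm, add_dotProduct, smul_dotProduct, cycleLaplacian_dotProduct,
      dotProduct_comm, ← euclNorm_sq, ← euclNorm_sq, smul_eq_mul]
    nlinarith [sq_nonneg (euclNorm (Δ w))]
  have hcs := dotProduct_le_euclNorm_mul (circB m d *ᵥ w) w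
  rcases (euclNorm_nonneg w).eq_or_lt with hw | hw
  · rw [← hw, mul_zero]
    exact euclNorm_nonneg _
  · exact le_of_mul_le_mul_right (by nlinarith) hw

theorem euclNorm_circB_mulVec_le (hm : 5 ≤ m) {d : ℝ} (hd : 0 ≤ d) (w : Fin m → ℝ) :
    euclNorm (circB m d *ᵥ w) ≤ (16 + d) * euclNorm w :=
  calc euclNorm (circB m d *ᵥ w) ≤ euclNorm (d • w) + euclNorm (Δ (Δ w)) := by
        rw [circB_mulVec hm]; exact euclNorm_add_le _ _
    _ ≤ d * euclNorm w + 4 * (4 * euclNorm w) := by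
        rw [euclNorm_smul, abs_of_nonneg hd]
        gcongr
        exact (euclNorm_cycleLaplacian_le _).trans
          (mul_le_mul_of_nonneg_left (euclNorm_cycleLaplacian_le w) (by norm_num))
    _ = (16 + d) * euclNorm w := by ring

theorem condNum_circB (hm : 5 ≤ m) (hme : Even m) {d : ℝ} (hd : 0 < d) :
    condNum (circB m d) = (16 + d) / d := by
  have hmax : IsGreatest (sphereImageNorms (circB m d)) (16 + d) := by
    refine ⟨?_, ?_⟩
    · obtain ⟨y, hy, hBy⟩ := exists_euclNorm_eq_one_of_mulVec_eq_smul (M := circB m d)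
        (w := fun j : Fin m => (-1 : ℝ) ^ (j : ℕ)) (c := 16 + d)
        (fun h => by simpa using congrFun h 0)
        (by rw [circB_mulVec hm, cycleLaplacian_alternating hme, map_smul,
          cycleLaplacian_alternating hme, smul_smul, ← add_smul, add_comm]; norm_num)
      exact ⟨y, hy, by rw [circB_transpose, hBy, abs_of_pos (by linarith)]⟩
    · rintro x ⟨y, hy, rfl⟩
      simpa [circB_transpose, hy] using euclNorm_circB_mulVec_le hm hd.le y
  have hmin : IsLeast (sphereImageNorms (circB m d)) d := by
    refine ⟨?_, ?_⟩
    · obtain ⟨y, hy, hBy⟩ := exists_euclNorm_eq_one_of_mulVec_eq_smul (M := circB m d)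
        (w := fun _ : Fin m => (1 : ℝ)) (c := d) (fun h => by simpa using congrFun h 0)
        (by rw [circB_mulVec hm, cycleLaplacian_const, map_zero, add_zero])
      exact ⟨y, hy, by rw [circB_transpose, hBy, abs_of_pos hd]⟩
    · rintro x ⟨y, hy, rfl⟩
      simpa [circB_transpose, hy] using mul_euclNorm_le_euclNorm_circB_mulVec hm d y
  rw [condNum_eq_div, hmax.csSup_eq, hmin.csInf_eq]

end Circulant

/-- For even `m ≥ 6`, `d > 0`, and `n = q·m` with `q ≥ 1`, and any
permutation matrices `U` (`m × m`) and `V` (`n × n`), the condition number of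
`A = U · [B B ⋯ B] · V` equals `(16 + d) / d`. -/
theorem stmt_19 (m q n : ℕ) (hm : 6 ≤ m) (hme : Even m) (hq : 0 < q)
    (hn : n = q * m) (d : ℝ) (hd : 0 < d)
    (U : Matrix (Fin m) (Fin m) ℝ) (hU : IsPermMatrix U)
    (V : Matrix (Fin n) (Fin n) ℝ) (hV : IsPermMatrix V)
    (A : Matrix (Fin m) (Fin n) ℝ)
    (hA : A = U * concatB m n (by omega) d * V) :
    condNum A = (16 + d) / d := by
  subst hA hn
  have : NeZero m := ⟨by omega⟩
  rw [condNum_mul_mul_of_isPermMatrix hU hV, condNum_concatB _ hq,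
    condNum_circB (by omega) hme hd]
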